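/- arXiv:2001.04826 — 5 statements merged into one kernel-verified Lean document; each statement's English description precedes it below -/
import Mathlib

section
/- Let d ≥ 1, E := ℝ^d × ℝ^d with the Euclidean inner product, J : E → E the linear map J(q,p) = (p,−q), g : ℝ → ℝ infinitely differentiable, and f : E → E the Euclidean Hamiltonian vector field f(u) = g(‖u‖²/2) • J u. Let u : ℝ → E be an infinitely differentiable solution of u′(t) = f(u(t)) with u(0) = u₀. Then for every k ≥ 1, the k-th derivative of u at 0 is parallel to f(u₀) if k is odd and parallel to u₀ if k is even; i.e., there exists a real scalar c_k with u^{(k)}(0) = c_k • f(u₀) for odd k and u^{(k)}(0) = c_k • u₀ for even k. -/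
open scoped RealInnerProductSpace

noncomputable section

/-- The phase space `E = ℝ^d × ℝ^d`, equipped with the Euclidean inner product
`⟪(q,p), (qQ,pQ)⟫ = ⟪q,qQ⟫ + ⟪p,pQ⟫`. -/
abbrev E (d : ℕ) : Type :=
  WithLp 2 (EuclideanSpace ℝ (Fin d) × EuclideanSpace ℝ (Fin d))

/-- The canonical symplectic rotation `J(q,p) = (p, -q)`. -/
def J (d : ℕ) (u : E d) : E d := WithLp.toLp 2 ((WithLp.ofLp u).2, -(WithLp.ofLp u).1)

/-- `J` as a continuous linear map. -/
def Jc (d : ℕ) : E d →L[ℝ] E d :=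
  ((WithLp.prodContinuousLinearEquiv 2 ℝ _ _).symm.toContinuousLinearMap.comp
    (((ContinuousLinearMap.snd ℝ _ _).prod (-(ContinuousLinearMap.fst ℝ _ _))))).comp
    (WithLp.prodContinuousLinearEquiv 2 ℝ _ _).toContinuousLinearMap

lemma Jc_apply (d : ℕ) (x : E d) : Jc d x = J d x := rfl

lemma Jc_Jc (d : ℕ) (x : E d) : Jc d (Jc d x) = -x := rfl

lemma inner_Jc (d : ℕ) (x : E d) : ⟪x, Jc d x⟫ = 0 := by
  have : ⟪x, Jc d x⟫ = ⟪(WithLp.ofLp x).1, (WithLp.ofLp x).2⟫ + ⟪(WithLp.ofLp x).2, -(WithLp.ofLp x).1⟫ := rfl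
  rw [this, inner_neg_right, real_inner_comm]; ring

lemma Jc_pow (d : ℕ) (n : ℕ) (x : E d) :
    ((Jc d ^ (2 * n)) x = ((-1 : ℝ) ^ n) • x) ∧
    ((Jc d ^ (2 * n + 1)) x = ((-1 : ℝ) ^ n) • Jc d x) := by
  induction n with
  | zero => simp
  | succ n ih =>
    have h2 : 2 * (n + 1) = (2 * n + 1) + 1 := by ring
    have e1 : (Jc d ^ (2 * (n + 1))) x = Jc d ((Jc d ^ (2 * n + 1)) x) := by
      rw [h2, pow_succ']; rfl
    have e2 : (Jc d ^ (2 * (n + 1) + 1)) x = Jc d ((Jc d ^ (2 * (n + 1))) x) := by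
      rw [pow_succ']; rfl
    constructor
    · rw [e1, ih.2, map_smul, Jc_Jc, smul_neg, pow_succ]
      simp [neg_smul]
    · rw [e2, e1, ih.2, map_smul, Jc_Jc, smul_neg, map_neg, map_smul, pow_succ]
      simp [neg_smul]

theorem Ecs (d : ℕ) : ContinuousSMul ℝ (E d) := inferInstance

/-- (Consequence of Lemma A.4 of the paper.) For a smooth solution of the Euclidean
Hamiltonian system `u' = f(u)`, `f(u) = g(‖u‖²/2) • J u`, `u(0) = u₀`, the `k`-th
derivative of `u` at `0` is parallel to `f(u₀)` for odd `k` and parallel to `u₀`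
for even `k`. -/
theorem iteratedDeriv_parallel_euclidean_hamiltonian
    (d : ℕ) (hd : 1 ≤ d) (g : ℝ → ℝ) (hg : ContDiff ℝ (⊤ : ℕ∞) g)
    (f : E d → E d) (hf : ∀ u : E d, f u = g (‖u‖ ^ 2 / 2) • J d u)
    (u : ℝ → E d) (u₀ : E d) (hu : ContDiff ℝ (⊤ : ℕ∞) u)
    (hode : ∀ t, deriv u t = f (u t)) (h0 : u 0 = u₀)
    (k : ℕ) (hk : 1 ≤ k) :
    ∃ c : ℝ, iteratedDeriv k u 0 = if Odd k then c • f u₀ else c • u₀ := by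
  haveI := Ecs d
  have hudiff : Differentiable ℝ u := hu.differentiable (by simp)
  have hder : ∀ t, HasDerivAt u (f (u t)) t := fun t => by
    have := (hudiff t).hasDerivAt
    rwa [hode t] at this
  -- the norm of the solution is constant
  have hipc : ∀ t, ⟪u t, u t⟫ = ⟪u₀, u₀⟫ := by
    intro t
    have hdiff : Differentiable ℝ (fun t => ⟪u t, u t⟫) :=
      hudiff.inner ℝ hudiff
    have hder0 : ∀ t, deriv (fun t => ⟪u t, u t⟫) t = 0 := by
      intro t
      have h := ((hder t).inner ℝ (hder t)).deriv
      have h1 : ⟪u t, g (‖u t‖ ^ 2 / 2) • J d (u t)⟫ = 0 := by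
        rw [real_inner_smul_right, ← Jc_apply, inner_Jc]; ring
      have h2 : ⟪g (‖u t‖ ^ 2 / 2) • J d (u t), u t⟫ = 0 := by
        rw [real_inner_comm]; exact h1
      rw [h, hf (u t)]
      simp only [h1, h2, add_zero, zero_add]
    have := is_const_of_deriv_eq_zero hdiff hder0 t 0
    rwa [h0] at this
  have hnc : ∀ t, ‖u t‖ ^ 2 = ‖u₀‖ ^ 2 := by
    intro t
    rw [← real_inner_self_eq_norm_sq, ← real_inner_self_eq_norm_sq]
    exact hipc t
  set c : ℝ := g (‖u₀‖ ^ 2 / 2) with hc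
  have hode' : ∀ t, HasDerivAt u (c • Jc d (u t)) t := by
    intro t
    have := hder t
    rwa [hf (u t), hnc t, ← Jc_apply] at this
  -- iterated derivatives
  have key : ∀ m t, iteratedDeriv m u t = c ^ m • (Jc d ^ m) (u t) := by
    intro m
    induction m with
    | zero => intro t; simp
    | succ m ih =>
      intro t
      rw [iteratedDeriv_succ]
      have h1 : HasDerivAt (fun s => c ^ m • (Jc d ^ m) (u s))
          (c ^ m • (Jc d ^ m) (c • Jc d (u t))) t :=
        (((Jc d ^ m).hasFDerivAt.comp_hasDerivAt t (hode' t))).fun_const_smul _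
      have h2 : iteratedDeriv m u = fun s => c ^ m • (Jc d ^ m) (u s) := funext ih
      rw [h2, h1.deriv, map_smul, smul_smul, pow_succ,
        pow_succ (Jc d) m, ContinuousLinearMap.mul_apply]
  have hfu₀ : f u₀ = c • Jc d u₀ := by rw [hf u₀, Jc_apply, hc]
  rcases Nat.even_or_odd k with he | ho
  · -- even case
    obtain ⟨n, hn⟩ := he
    have hkn : k = 2 * n := by omega
    refine ⟨c ^ k * (-1 : ℝ) ^ n, ?_⟩
    rw [if_neg (Nat.not_odd_iff_even.mpr ⟨n, hn⟩)]
    rw [key k 0, h0, hkn, (Jc_pow d n u₀).1, ← hkn, smul_smul]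
  · obtain ⟨n, hn⟩ := ho
    refine ⟨(-1 : ℝ) ^ n * c ^ (2 * n), ?_⟩
    rw [if_pos ⟨n, hn⟩, key k 0, h0, hn, (Jc_pow d n u₀).2, hfu₀, smul_smul, smul_smul,
      pow_succ]
    ring_nf
end
end

section
/- Let V be a real inner product space and f : V → V a map satisfying ⟨f(v), v⟩ = 0 for all v ∈ V. Apply an explicit s-stage Runge–Kutta method with strictly lower triangular coefficients a and weights b to f with initial value u₀ and step size h, producing stages y_i and update u₊(h), and write f_i := f(y_i). Then the following two exact identities hold: 2(‖u₀‖² − ⟨u₊(h), u₀⟩) = 2 h² Σ_{i,j} b_i a_{ij} ⟨f_i, f_j⟩ and ‖u₊(h) − u₀‖² = h² Σ_{i,j} b_i b_j ⟨f_i, f_j⟩. Consequently, whenever the denominators are nonzero, the relaxation parameter satisfies γ(h) = (2 Σ_{i,j} b_i a_{ij} ⟨f_i, f_j⟩) / (Σ_{i,j} b_i b_j ⟨f_i, f_j⟩). -/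
open scoped RealInnerProductSpace

/-! Since `⟪f v, v⟫ = 0`, pairing the stage equation `yᵢ = u₀ + h ∑ⱼ aᵢⱼ fⱼ` with `fᵢ` gives
`⟪fᵢ, u₀⟫ = -h ∑ⱼ aᵢⱼ ⟪fᵢ, fⱼ⟫`. Hence `⟪u₀ - u₊, u₀⟫ = -h ∑ᵢ bᵢ ⟪fᵢ, u₀⟫` is the quadratic form
`h² ∑ᵢⱼ bᵢ aᵢⱼ ⟪fᵢ, fⱼ⟫`, while `‖u₊ - u₀‖² = h² ∑ᵢⱼ bᵢ bⱼ ⟪fᵢ, fⱼ⟫` is bilinearity alone; the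
factor `h²` cancels in the quotient `γ(h)`. -/

section RungeKutta

variable {V ι : Type*} [NormedAddCommGroup V] [InnerProductSpace ℝ V] [Fintype ι]

theorem inner_sum_smul_sum_smul (b c : ι → ℝ) (v : ι → V) :
    ⟪∑ i, b i • v i, ∑ j, c j • v j⟫ = ∑ i, ∑ j, b i * c j * ⟪v i, v j⟫ := by
  simp only [sum_inner, inner_sum, real_inner_smul_left, real_inner_smul_right]
  rw [Finset.sum_comm]
  exact Finset.sum_congr rfl fun i _ => Finset.sum_congr rfl fun j _ => by ring

theorem norm_smul_sum_smul_sq (h : ℝ) (b : ι → ℝ) (v : ι → V) :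
    ‖h • ∑ i, b i • v i‖ ^ 2 = h ^ 2 * ∑ i, ∑ j, b i * b j * ⟪v i, v j⟫ := by
  rw [← real_inner_self_eq_norm_sq, real_inner_smul_left, real_inner_smul_right,
    inner_sum_smul_sum_smul]
  ring

theorem inner_stage_initial_of_inner_self_eq_zero {f : V → V} (hf : ∀ v, ⟪f v, v⟫ = 0)
    {a : ι → ℝ} {u₀ : V} {h : ℝ} {y : ι → V} {yᵢ : V}
    (hyᵢ : yᵢ = u₀ + h • ∑ j, a j • f (y j)) :
    ⟪f yᵢ, u₀⟫ = -(h * ∑ j, a j * ⟪f yᵢ, f (y j)⟫) := by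
  have hzero := hf yᵢ
  nth_rewrite 2 [hyᵢ] at hzero
  simp only [inner_add_right, real_inner_smul_right, inner_sum] at hzero
  linarith

theorem inner_rk_increment_initial {f : V → V} (hf : ∀ v, ⟪f v, v⟫ = 0)
    {a : ι → ι → ℝ} (b : ι → ℝ) {u₀ : V} {h : ℝ} {y : ι → V}
    (hy : ∀ i, y i = u₀ + h • ∑ j, a i j • f (y j)) :
    ⟪h • ∑ i, b i • f (y i), u₀⟫ = -(h ^ 2 * ∑ i, ∑ j, b i * a i j * ⟪f (y i), f (y j)⟫) := by
  simp only [real_inner_smul_left, sum_inner,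
    fun i => inner_stage_initial_of_inner_self_eq_zero hf (hy i), Finset.mul_sum]
  simp only [← Finset.sum_neg_distrib, Finset.mul_sum]
  exact Finset.sum_congr rfl fun i _ => Finset.sum_congr rfl fun j _ => by ring

end RungeKutta

theorem relaxation_parameter_rk_formula_general
    {V : Type*} [NormedAddCommGroup V] [InnerProductSpace ℝ V]
    (f : V → V) (hf : ∀ v : V, ⟪f v, v⟫ = 0)
    (s : ℕ) (a : Fin s → Fin s → ℝ)
    (b : Fin s → ℝ) (u₀ : V) (h : ℝ)
    (y : Fin s → V) (hy : ∀ i, y i = u₀ + h • ∑ j, a i j • f (y j))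
    (uplus : V) (hup : uplus = u₀ + h • ∑ i, b i • f (y i)) :
    2 * (‖u₀‖ ^ 2 - ⟪uplus, u₀⟫)
      = 2 * h ^ 2 * ∑ i, ∑ j, b i * a i j * ⟪f (y i), f (y j)⟫ ∧
    ‖uplus - u₀‖ ^ 2 = h ^ 2 * ∑ i, ∑ j, b i * b j * ⟪f (y i), f (y j)⟫ ∧
    (‖uplus - u₀‖ ^ 2 ≠ 0 → (∑ i, ∑ j, b i * b j * ⟪f (y i), f (y j)⟫) ≠ 0 →
      2 * ⟪u₀ - uplus, u₀⟫ / ‖uplus - u₀‖ ^ 2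
        = 2 * (∑ i, ∑ j, b i * a i j * ⟪f (y i), f (y j)⟫)
            / ∑ i, ∑ j, b i * b j * ⟪f (y i), f (y j)⟫) := by
  have hinner : ⟪u₀ - uplus, u₀⟫ = h ^ 2 * ∑ i, ∑ j, b i * a i j * ⟪f (y i), f (y j)⟫ := by
    rw [hup, sub_add_cancel_left, inner_neg_left, inner_rk_increment_initial hf b hy, neg_neg]
  have hnorm : ‖uplus - u₀‖ ^ 2 = h ^ 2 * ∑ i, ∑ j, b i * b j * ⟪f (y i), f (y j)⟫ := by
    rw [hup, add_sub_cancel_left, norm_smul_sum_smul_sq]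
  refine ⟨?_, hnorm, fun hne _ => ?_⟩
  · rw [← real_inner_self_eq_norm_sq, ← inner_sub_left, hinner, mul_assoc]
  · have hh : h ^ 2 ≠ 0 := left_ne_zero_of_mul (hnorm ▸ hne)
    rw [hinner, hnorm, mul_left_comm, mul_div_mul_left _ _ hh]

/-- For a vector field `f` with `⟪f(v), v⟫ = 0`, the explicit Runge–Kutta update
`u₊ = u₀ + h ∑ᵢ bᵢ f(yᵢ)` satisfies the exact identities
`2(‖u₀‖² - ⟪u₊, u₀⟫) = 2h² ∑ᵢⱼ bᵢ aᵢⱼ ⟪fᵢ, fⱼ⟫` and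
`‖u₊ - u₀‖² = h² ∑ᵢⱼ bᵢ bⱼ ⟪fᵢ, fⱼ⟫`; consequently, whenever the denominators are
nonzero, the relaxation parameter equals `2 ∑ᵢⱼ bᵢ aᵢⱼ ⟪fᵢ, fⱼ⟫ / ∑ᵢⱼ bᵢ bⱼ ⟪fᵢ, fⱼ⟫`. -/
theorem relaxation_parameter_rk_formula
    {V : Type*} [NormedAddCommGroup V] [InnerProductSpace ℝ V]
    (f : V → V) (hf : ∀ v : V, ⟪f v, v⟫ = 0)
    (s : ℕ) (a : Fin s → Fin s → ℝ) (ha : ∀ i j : Fin s, i ≤ j → a i j = 0)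
    (b : Fin s → ℝ) (u₀ : V) (h : ℝ)
    (y : Fin s → V) (hy : ∀ i, y i = u₀ + h • ∑ j, a i j • f (y j))
    (uplus : V) (hup : uplus = u₀ + h • ∑ i, b i • f (y i)) :
    2 * (‖u₀‖ ^ 2 - ⟪uplus, u₀⟫)
      = 2 * h ^ 2 * ∑ i, ∑ j, b i * a i j * ⟪f (y i), f (y j)⟫ ∧
    ‖uplus - u₀‖ ^ 2 = h ^ 2 * ∑ i, ∑ j, b i * b j * ⟪f (y i), f (y j)⟫ ∧
    (‖uplus - u₀‖ ^ 2 ≠ 0 → (∑ i, ∑ j, b i * b j * ⟪f (y i), f (y j)⟫) ≠ 0 →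
      2 * ⟪u₀ - uplus, u₀⟫ / ‖uplus - u₀‖ ^ 2
        = 2 * (∑ i, ∑ j, b i * a i j * ⟪f (y i), f (y j)⟫)
            / ∑ i, ∑ j, b i * b j * ⟪f (y i), f (y j)⟫) :=
  relaxation_parameter_rk_formula_general f hf s a b u₀ h y hy uplus hup
end

section
/- Let d ≥ 1, E := ℝ^d × ℝ^d with the Euclidean inner product, J : E → E the linear map J(q,p) = (p,−q), g : ℝ → ℝ infinitely differentiable, and f : E → E the Euclidean Hamiltonian vector field f(u) = g(‖u‖²/2) • J u. Fix u₀ ∈ E with u₀ ≠ 0 and g(‖u₀‖²/2) ≠ 0. Apply an explicit s-stage Runge–Kutta method with strictly lower triangular coefficients a and weights b satisfying Σ_i b_i = 1 and Σ_i b_i c_i = 1/2 (where c_i := Σ_j a_{ij}) to f with initial value u₀ and step size h, producing update u₊(h), and suppose p ≥ 2 is such that ‖u₊(h)‖² − ‖u₀‖² = O(h^{p+1}) as h → 0. Then for all sufficiently small h ≠ 0 one has u₊(h) ≠ u₀, and the relaxation parameter γ(h) := 2⟨u₀ − u₊(h), u₀⟩ / ‖u₊(h) − u₀‖² satisfies γ(h)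 − 1 = O(h^{p−1}) as h → 0. -/
open scoped RealInnerProductSpace
open Asymptotics Filter Topology

noncomputable section

set_option maxHeartbeats 1600000 in
/-- For the Euclidean Hamiltonian vector field `f(u) = g(‖u‖²/2) • J u` (`g` smooth,
`u₀ ≠ 0`, `g(‖u₀‖²/2) ≠ 0`) and an explicit Runge–Kutta method satisfying the
second-order conditions, if `‖u₊(h)‖² - ‖u₀‖² = O(h^{p+1})` with `p ≥ 2`, then
`u₊(h) ≠ u₀` for all sufficiently small `h ≠ 0` and the relaxation parameter
`γ(h) = 2⟪u₀ - u₊(h), u₀⟫ / ‖u₊(h) - u₀‖²` satisfies `γ(h) - 1 = O(h^{p-1})`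
as `h → 0`. -/
theorem relaxation_parameter_near_one_euclidean_hamiltonian
    (d : ℕ) (hd : 1 ≤ d) (g : ℝ → ℝ) (hg : ContDiff ℝ (⊤ : ℕ∞) g)
    (f : E d → E d) (hf : ∀ u : E d, f u = g (‖u‖ ^ 2 / 2) • J d u)
    (u₀ : E d) (hu₀ : u₀ ≠ 0) (hgu : g (‖u₀‖ ^ 2 / 2) ≠ 0)
    (s : ℕ) (a : Fin s → Fin s → ℝ) (ha : ∀ i j : Fin s, i ≤ j → a i j = 0)
    (b : Fin s → ℝ) (hb1 : ∑ i, b i = 1) (hb2 : ∑ i, b i * (∑ j, a i j) = 1 / 2)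
    (y : ℝ → Fin s → E d)
    (hy : ∀ (h : ℝ) (i : Fin s), y h i = u₀ + h • ∑ j, a i j • f (y h j))
    (uplus : ℝ → E d) (hup : ∀ h : ℝ, uplus h = u₀ + h • ∑ i, b i • f (y h i))
    (p : ℕ) (hp : 2 ≤ p)
    (horder : (fun h : ℝ => ‖uplus h‖ ^ 2 - ‖u₀‖ ^ 2) =O[𝓝 (0 : ℝ)] fun h => h ^ (p + 1)) :
    (∀ᶠ h : ℝ in 𝓝[≠] (0 : ℝ), uplus h ≠ u₀) ∧
    (fun h : ℝ => 2 * ⟪u₀ - uplus h, u₀⟫ / ‖uplus h - u₀‖ ^ 2 - 1)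
      =O[𝓝[≠] (0 : ℝ)] fun h => h ^ (p - 1) := by
  classical
  -- continuity of J
  have hJc : Continuous (J d) := by
    show Continuous fun u : E d => (WithLp.toLp 2 ((WithLp.ofLp u).2, -(WithLp.ofLp u).1) : E d)
    exact (((WithLp.prodContinuousLinearEquiv 2 ℝ (EuclideanSpace ℝ (Fin d))
        (EuclideanSpace ℝ (Fin d))).symm.continuous.comp
      ((continuous_snd.prodMk continuous_fst.neg).comp
        (WithLp.prodContinuousLinearEquiv 2 ℝ (EuclideanSpace ℝ (Fin d))
        (EuclideanSpace ℝ (Fin d))).continuous))).congr fun u => rfl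
  -- continuity of f
  have hfc : Continuous f := by
    have hfe : f = fun u => g (‖u‖ ^ 2 / 2) • J d u := funext hf
    rw [hfe]
    exact (hg.continuous.comp ((continuous_norm.pow 2).div_const 2)).smul hJc
  -- continuity of stages
  have hstep : ∀ i : Fin s, (∀ j : Fin s, j < i → Continuous fun h => y h j) →
      Continuous fun h => y h i := by
    intro i IH
    have hye : (fun h => y h i) = fun h => u₀ + h • ∑ j, a i j • f (y h j) :=
      funext fun h => hy h i
    rw [hye]
    refine continuous_const.add (continuous_id.smul (continuous_finset_sum _ fun j _ => ?_))
    by_cases hj : j < i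
    · exact (hfc.comp (IH j hj)).const_smul (a i j)
    · have h0 : a i j = 0 := ha i j (not_lt.mp hj)
      simp only [h0, zero_smul]
      exact continuous_const
  have hycont : ∀ i : Fin s, Continuous fun h => y h i := by
    have H : ∀ n : ℕ, ∀ i : Fin s, (i : ℕ) < n → Continuous fun h => y h i := by
      intro n
      induction n with
      | zero => intro i hi; omega
      | succ n IH =>
        intro i hi
        refine hstep i fun j hj => IH j ?_
        have := Fin.lt_def.mp hj
        omega
    intro i
    exact H s i i.isLt
  -- the increment function
  set F : ℝ → E d := fun h => ∑ i, b i • f (y h i) with hFdef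
  have hFc : Continuous F :=
    continuous_finset_sum _ fun i _ => (hfc.comp (hycont i)).const_smul (b i)
  have hΔ : ∀ h : ℝ, uplus h - u₀ = h • F h := by
    intro h; rw [hup]; exact add_sub_cancel_left _ _
  have hy0 : ∀ i : Fin s, y 0 i = u₀ := by
    intro i; rw [hy]; simp
  have hF0 : F 0 = f u₀ := by
    simp only [hFdef, hy0, ← Finset.sum_smul, hb1, one_smul]
  -- f u₀ ≠ 0
  have hJu0 : J d u₀ ≠ 0 := by
    intro h0
    apply hu₀
    have hn : ‖J d u₀‖ ^ 2 = ‖u₀‖ ^ 2 := by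
      rw [WithLp.prod_norm_sq_eq_of_L2, WithLp.prod_norm_sq_eq_of_L2]
      show ‖(WithLp.ofLp u₀).2‖ ^ 2 + ‖-(WithLp.ofLp u₀).1‖ ^ 2 = ‖(WithLp.ofLp u₀).1‖ ^ 2 + ‖(WithLp.ofLp u₀).2‖ ^ 2
      rw [norm_neg]; ring
    rw [h0, norm_zero] at hn
    have : ‖u₀‖ = 0 := by nlinarith [norm_nonneg u₀]
    exact norm_eq_zero.mp this
  have hfu0 : f u₀ ≠ 0 := by
    rw [hf]; exact smul_ne_zero hgu hJu0
  set K : ℝ := ‖f u₀‖ / 2 with hKdef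
  have hK : 0 < K := by
    have : 0 < ‖f u₀‖ := norm_pos_iff.mpr hfu0
    positivity
  have hev : ∀ᶠ h : ℝ in 𝓝 (0 : ℝ), K < ‖F h‖ := by
    have ht : Tendsto (fun h => ‖F h‖) (𝓝 0) (𝓝 ‖f u₀‖) := by
      have := (hFc.norm.tendsto 0)
      rwa [hF0] at this
    refine ht.eventually_const_lt ?_
    rw [hKdef]
    have : 0 < ‖f u₀‖ := norm_pos_iff.mpr hfu0
    linarith
  have hevW : ∀ᶠ h : ℝ in 𝓝[≠] (0 : ℝ), K < ‖F h‖ := nhdsWithin_le_nhds hev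
  have hne : ∀ᶠ h : ℝ in 𝓝[≠] (0 : ℝ), h ≠ 0 := by
    have := eventually_mem_nhdsWithin (s := {(0:ℝ)}ᶜ) (a := (0:ℝ))
    exact this.mono fun h hh => hh
  have hΔne : ∀ᶠ h : ℝ in 𝓝[≠] (0 : ℝ), uplus h ≠ u₀ := by
    filter_upwards [hevW, hne] with h hFh hh0
    intro hequ
    have : uplus h - u₀ = 0 := sub_eq_zero.mpr hequ
    rw [hΔ] at this
    have hF0' : F h ≠ 0 := by
      intro hz; rw [hz, norm_zero] at hFh; linarith
    exact (smul_ne_zero hh0 hF0') this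
  refine ⟨hΔne, ?_⟩
  -- big-O part
  obtain ⟨C, hC⟩ := isBigO_iff.mp horder
  have hC' : ∀ᶠ h : ℝ in 𝓝[≠] (0 : ℝ),
      ‖‖uplus h‖ ^ 2 - ‖u₀‖ ^ 2‖ ≤ |C| * ‖h ^ (p + 1)‖ := by
    filter_upwards [nhdsWithin_le_nhds hC] with h hh
    exact hh.trans (mul_le_mul_of_nonneg_right (le_abs_self C) (norm_nonneg _))
  rw [isBigO_iff]
  refine ⟨|C| / K ^ 2, ?_⟩
  filter_upwards [hC', hevW, hne] with h hCh hFh hh0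
  set Δ : E d := uplus h - u₀ with hΔdef
  have hDpos : 0 < ‖Δ‖ ^ 2 := by
    have hF0' : F h ≠ 0 := by
      intro hz; rw [hz, norm_zero] at hFh; linarith
    have hΔ0 : Δ ≠ 0 := by rw [hΔdef, hΔ]; exact smul_ne_zero hh0 hF0'
    exact pow_pos (norm_pos_iff.mpr hΔ0) 2
  -- key identity
  have hDA : 2 * ⟪u₀ - uplus h, u₀⟫ = ‖Δ‖ ^ 2 - (‖uplus h‖ ^ 2 - ‖u₀‖ ^ 2) := by
    have h1 : ‖uplus h‖ ^ 2 = ‖Δ + u₀‖ ^ 2 := by rw [hΔdef, sub_add_cancel]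
    rw [norm_add_sq_real] at h1
    have h2 : ⟪u₀ - uplus h, u₀⟫ = -⟪Δ, u₀⟫ := by
      rw [hΔdef, ← neg_sub, inner_neg_left]
    rw [h2]; linarith
  have hexpr : 2 * ⟪u₀ - uplus h, u₀⟫ / ‖uplus h - u₀‖ ^ 2 - 1
      = -((‖uplus h‖ ^ 2 - ‖u₀‖ ^ 2) / ‖Δ‖ ^ 2) := by
    rw [← hΔdef, hDA]
    rw [sub_div, div_self hDpos.ne']; ring
  rw [hexpr, norm_neg, norm_div]
  -- denominator lower bound
  have hDlb : K ^ 2 * h ^ 2 ≤ ‖Δ‖ ^ 2 := by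
    rw [hΔdef, hΔ, norm_smul, mul_pow, Real.norm_eq_abs, sq_abs]
    have : K ^ 2 ≤ ‖F h‖ ^ 2 := by nlinarith [hK.le, hFh.le]
    nlinarith [sq_nonneg h]
  have hh2 : (0:ℝ) < h ^ 2 := by positivity
  have hKh : (0:ℝ) < K ^ 2 * h ^ 2 := by positivity
  have step1 : ‖‖uplus h‖ ^ 2 - ‖u₀‖ ^ 2‖ / ‖‖Δ‖ ^ 2‖
      ≤ (|C| * ‖h ^ (p + 1)‖) / (K ^ 2 * h ^ 2) := by
    rw [Real.norm_eq_abs (‖Δ‖ ^ 2), abs_of_pos hDpos]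
    exact div_le_div₀ (by positivity) hCh hKh hDlb
  refine step1.trans (le_of_eq ?_)
  have hps : p + 1 = (p - 1) + 2 := by omega
  rw [hps, pow_add, norm_mul]
  rw [Real.norm_eq_abs (h ^ 2), abs_of_pos hh2]
  field_simp
end
end

section
/- Let N ≥ 1 and let D₁, D₃ be real N×N matrices that are skew-symmetric (Dᵀ = −D) and satisfy D₁𝟙 = 0 and D₃𝟙 = 0, where 𝟙 is the all-ones vector. If u : ℝ → ℝᴺ is differentiable and satisfies the split-form Korteweg–de Vries semidiscretization ∂_t u + (1/3)(D₁(u ∘ u) + u ∘ (D₁ u)) + D₃ u = 0, where ∘ denotes elementwise (Hadamard) multiplication, then the total mass Σ_{i=1}^{N} u_i(t) is constant in t. -/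
open Matrix

/-!
Summing the components of a vector is pairing it with `𝟙`. For a skew-symmetric `D` with
`D 𝟙 = 0` one has `𝟙ᵀ D = -(D 𝟙)ᵀ = 0`, so the conservative terms `D₁ (u ∘ u)` and `D₃ u` have
zero sum. The remaining term sums to `u ⬝ D₁ u`, which vanishes because the quadratic form of a
skew-symmetric matrix is zero. Hence the total mass has zero derivative and is constant.
-/

namespace Matrix

variable {ι R : Type*} [Fintype ι]

theorem one_vecMul_eq_zero_of_transpose_eq_neg [CommRing R] {M : Matrix ι ι R}
    (hskew : Mᵀ = -M) (hone : M *ᵥ 1 = 0) : 1 ᵥ* M = 0 := by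
  rw [← mulVec_transpose, hskew, neg_mulVec, hone, neg_zero]

theorem sum_mulVec_eq_zero_of_one_vecMul_eq_zero [CommSemiring R] {M : Matrix ι ι R}
    (h : 1 ᵥ* M = 0) (v : ι → R) : ∑ i, (M *ᵥ v) i = 0 := by
  rw [← one_dotProduct, dotProduct_mulVec, h, zero_dotProduct]

theorem dotProduct_mulVec_self_eq_zero_of_transpose_eq_neg [CommRing R] [NoZeroDivisors R]
    [CharZero R] {M : Matrix ι ι R} (hskew : Mᵀ = -M) (v : ι → R) : v ⬝ᵥ (M *ᵥ v) = 0 := by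
  rw [← self_eq_neg]
  calc v ⬝ᵥ (M *ᵥ v) = (Mᵀ *ᵥ v) ⬝ᵥ v := by rw [dotProduct_mulVec, mulVec_transpose]
    _ = -(v ⬝ᵥ (M *ᵥ v)) := by rw [hskew, neg_mulVec, neg_dotProduct, dotProduct_comm]

end Matrix

section KdV

variable {ι R : Type*} [Fintype ι] [Field R]

def kdvSplitFormRHS (D₁ D₃ : Matrix ι ι R) (u : ι → R) : ι → R :=
  -((1 / 3 : R) • (D₁ *ᵥ (u * u) + u * D₁ *ᵥ u) + D₃ *ᵥ u)

theorem sum_kdvSplitFormRHS_eq_zero [CharZero R] {D₁ D₃ : Matrix ι ι R}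
    (h1skew : D₁ᵀ = -D₁) (h3skew : D₃ᵀ = -D₃) (h1one : D₁ *ᵥ 1 = 0) (h3one : D₃ *ᵥ 1 = 0)
    (u : ι → R) : ∑ i, kdvSplitFormRHS D₁ D₃ u i = 0 := by
  have hconv₁ := sum_mulVec_eq_zero_of_one_vecMul_eq_zero
    (one_vecMul_eq_zero_of_transpose_eq_neg h1skew h1one) (u * u)
  have hconv₃ := sum_mulVec_eq_zero_of_one_vecMul_eq_zero
    (one_vecMul_eq_zero_of_transpose_eq_neg h3skew h3one) u
  have hquad : ∑ i, (u * D₁ *ᵥ u) i = 0 :=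
    dotProduct_mulVec_self_eq_zero_of_transpose_eq_neg h1skew u
  simp only [kdvSplitFormRHS, Pi.neg_apply, Pi.add_apply, Pi.smul_apply, smul_eq_mul]
  rw [Finset.sum_neg_distrib, Finset.sum_add_distrib, ← Finset.mul_sum, Finset.sum_add_distrib,
    hconv₁, hquad, hconv₃]
  ring

end KdV

theorem sum_apply_eq_of_hasDerivAt_of_sum_eq_zero {ι : Type*} [Fintype ι] {u F : ℝ → ι → ℝ}
    (hu : ∀ t, HasDerivAt u (F t) t) (hF : ∀ t, ∑ i, F t i = 0) (t s : ℝ) :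
    ∑ i, u t i = ∑ i, u s i := by
  have hmass : ∀ t, HasDerivAt (fun r => ∑ i, u r i) 0 t := fun t =>
    (HasDerivAt.fun_sum fun i _ => hasDerivAt_pi.mp (hu t) i).congr_deriv (hF t)
  exact is_const_of_deriv_eq_zero (fun t => (hmass t).differentiableAt) (fun t => (hmass t).deriv)
    t s

theorem kdv_split_form_mass_conservation_general
    (N : ℕ) (D₁ D₃ : Matrix (Fin N) (Fin N) ℝ)
    (h1skew : D₁.transpose = -D₁) (h3skew : D₃.transpose = -D₃)
    (h1one : D₁.mulVec (fun _ => 1) = 0) (h3one : D₃.mulVec (fun _ => 1) = 0)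
    (u : ℝ → Fin N → ℝ)
    (hu : ∀ t : ℝ, HasDerivAt u
      (-((1 / 3 : ℝ) • (D₁.mulVec (u t * u t) + u t * D₁.mulVec (u t)) + D₃.mulVec (u t))) t)
    (t : ℝ) :
    ∑ i, u t i = ∑ i, u 0 i :=
  sum_apply_eq_of_hasDerivAt_of_sum_eq_zero (F := fun t => kdvSplitFormRHS D₁ D₃ (u t)) hu
    (fun t => sum_kdvSplitFormRHS_eq_zero h1skew h3skew h1one h3one (u t)) t 0

/-- For skew-symmetric derivative matrices `D₁`, `D₃` annihilating the constant vector,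
the split-form KdV semidiscretization
`∂ₜ u + (1/3)(D₁(u∘u) + u∘(D₁u)) + D₃ u = 0` conserves the total mass `∑ᵢ uᵢ(t)`. -/
theorem kdv_split_form_mass_conservation
    (N : ℕ) (hN : 1 ≤ N) (D₁ D₃ : Matrix (Fin N) (Fin N) ℝ)
    (h1skew : D₁.transpose = -D₁) (h3skew : D₃.transpose = -D₃)
    (h1one : D₁.mulVec (fun _ => 1) = 0) (h3one : D₃.mulVec (fun _ => 1) = 0)
    (u : ℝ → Fin N → ℝ)
    (hu : ∀ t : ℝ, HasDerivAt u
      (-((1 / 3 : ℝ) • (D₁.mulVec (u t * u t) + u t * D₁.mulVec (u t)) + D₃.mulVec (u t))) t)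
    (t : ℝ) :
    ∑ i, u t i = ∑ i, u 0 i :=
  kdv_split_form_mass_conservation_general N D₁ D₃ h1skew h3skew h1one h3one u hu t
end

section
/- Let N ≥ 1 and let D₁, D₃ be real N×N skew-symmetric matrices (Dᵀ = −D). If u : ℝ → ℝᴺ is differentiable and satisfies the split-form Korteweg–de Vries semidiscretization ∂_t u + (1/3)(D₁(u ∘ u) + u ∘ (D₁ u)) + D₃ u = 0, where ∘ denotes elementwise (Hadamard) multiplication, then the total energy (1/2)Σ_{i=1}^{N} u_i(t)² is constant in t. -/
/-!
Differentiating, `d/dt (½ u ⬝ᵥ u) = u ⬝ᵥ u'`. The linear term contributes `u ⬝ᵥ D₃ u = 0` since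
`D₃` is skew-symmetric. In the nonlinear term, skew-symmetry of `D₁` moves it across the dot
product, `u ⬝ᵥ D₁ (u ∘ u) = -((u ∘ u) ⬝ᵥ D₁ u)`, while `u ⬝ᵥ (u ∘ D₁ u) = (u ∘ u) ⬝ᵥ D₁ u`:
the conservative and advective halves of the split form cancel exactly.
-/

open Matrix

theorem dotProduct_mul_eq_mul_dotProduct {n R : Type*} [Fintype n] [NonUnitalSemiring R]
    (x y z : n → R) : x ⬝ᵥ (y * z) = (x * y) ⬝ᵥ z := by
  simp only [dotProduct, Pi.mul_apply, mul_assoc]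

section SkewSymmetric

variable {n R : Type*} [Fintype n] [CommRing R] {A : Matrix n n R}

theorem dotProduct_mulVec_eq_neg_of_transpose_eq_neg (hA : Aᵀ = -A) (x y : n → R) :
    x ⬝ᵥ A *ᵥ y = -(y ⬝ᵥ A *ᵥ x) := by
  rw [← dotProduct_transpose_mulVec, hA, neg_mulVec, dotProduct_neg]

theorem dotProduct_mulVec_self_of_transpose_eq_neg [IsAddTorsionFree R] (hA : Aᵀ = -A)
    (x : n → R) : x ⬝ᵥ A *ᵥ x = 0 :=
  self_eq_neg.mp (dotProduct_mulVec_eq_neg_of_transpose_eq_neg hA x x)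

theorem dotProduct_split_form_eq_zero (hA : Aᵀ = -A) (u : n → R) :
    u ⬝ᵥ (A *ᵥ (u * u) + u * A *ᵥ u) = 0 := by
  rw [dotProduct_add, dotProduct_mulVec_eq_neg_of_transpose_eq_neg hA,
    dotProduct_mul_eq_mul_dotProduct, neg_add_cancel]

end SkewSymmetric

theorem HasDerivAt.dotProduct {n : Type*} [Fintype n] {u v : ℝ → n → ℝ} {u' v' : n → ℝ}
    {t : ℝ} (hu : HasDerivAt u u' t) (hv : HasDerivAt v v' t) :
    HasDerivAt (fun s ↦ u s ⬝ᵥ v s) (u' ⬝ᵥ v t + u t ⬝ᵥ v') t := by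
  have hterm : ∀ i ∈ Finset.univ,
      HasDerivAt (fun s ↦ u s i * v s i) (u' i * v t i + u t i * v' i) t := fun i _ ↦
    (hasDerivAt_pi.mp hu i).mul (hasDerivAt_pi.mp hv i)
  have hsum := HasDerivAt.fun_sum hterm
  rw [Finset.sum_add_distrib] at hsum
  exact hsum

theorem dotProduct_self_eq_of_dotProduct_deriv_eq_zero {n : Type*} [Fintype n]
    {u u' : ℝ → n → ℝ} (hu : ∀ t, HasDerivAt u (u' t) t) (horth : ∀ t, u t ⬝ᵥ u' t = 0)
    (s t : ℝ) : u s ⬝ᵥ u s = u t ⬝ᵥ u t := by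
  have hderiv : ∀ t, HasDerivAt (fun s ↦ u s ⬝ᵥ u s) 0 t := fun t ↦ by
    simpa [dotProduct_comm (u' t), horth] using (hu t).dotProduct (hu t)
  exact is_const_of_deriv_eq_zero (fun t ↦ (hderiv t).differentiableAt)
    (fun t ↦ (hderiv t).deriv) s t

theorem kdv_split_form_energy_conservation_general
    (N : ℕ) (D₁ D₃ : Matrix (Fin N) (Fin N) ℝ)
    (h1skew : D₁.transpose = -D₁) (h3skew : D₃.transpose = -D₃)
    (u : ℝ → Fin N → ℝ)
    (hu : ∀ t : ℝ, HasDerivAt u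
      (-((1 / 3 : ℝ) • (D₁.mulVec (u t * u t) + u t * D₁.mulVec (u t)) + D₃.mulVec (u t))) t)
    (t : ℝ) :
    (1 / 2) * ∑ i, u t i ^ 2 = (1 / 2) * ∑ i, u 0 i ^ 2 := by
  have horth : ∀ s, u s ⬝ᵥ
      -((1 / 3 : ℝ) • (D₁ *ᵥ (u s * u s) + u s * D₁ *ᵥ u s) + D₃ *ᵥ u s) = 0 := fun s ↦ by
    rw [dotProduct_neg, dotProduct_add, dotProduct_smul, dotProduct_split_form_eq_zero h1skew,
      dotProduct_mulVec_self_of_transpose_eq_neg h3skew, smul_zero, add_zero, neg_zero]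
  have henergy := dotProduct_self_eq_of_dotProduct_deriv_eq_zero hu horth t 0
  simp only [dotProduct, ← sq] at henergy
  rw [henergy]

/-- For skew-symmetric derivative matrices `D₁`, `D₃`, the split-form KdV
semidiscretization `∂ₜ u + (1/3)(D₁(u∘u) + u∘(D₁u)) + D₃ u = 0` conserves the total
energy `(1/2)∑ᵢ uᵢ(t)²`. -/
theorem kdv_split_form_energy_conservation
    (N : ℕ) (hN : 1 ≤ N) (D₁ D₃ : Matrix (Fin N) (Fin N) ℝ)
    (h1skew : D₁.transpose = -D₁) (h3skew : D₃.transpose = -D₃)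
    (u : ℝ → Fin N → ℝ)
    (hu : ∀ t : ℝ, HasDerivAt u
      (-((1 / 3 : ℝ) • (D₁.mulVec (u t * u t) + u t * D₁.mulVec (u t)) + D₃.mulVec (u t))) t)
    (t : ℝ) :
    (1 / 2) * ∑ i, u t i ^ 2 = (1 / 2) * ∑ i, u 0 i ^ 2 :=
  kdv_split_form_energy_conservation_general N D₁ D₃ h1skew h3skew u hu t
end
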